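/- arXiv:1607.04364 — 3 statements merged into one kernel-verified Lean document; each statement's English description precedes it below -/
import Mathlib

section
/- If f : X → Y is a closed irreducible continuous surjection and Y is separable, then X is separable. -/
/-- A continuous surjection is *irreducible* if no proper closed subset maps onto all of `Y`. -/
def IsIrreducibleMap {X Y : Type*} [TopologicalSpace X] (f : X → Y) : Prop :=
  ∀ A : Set X, IsClosed A → f '' A = Set.univ → A = Set.univ

/-- If `f : X → Y` is a closed irreducible continuous surjection and `Y` is separable,
then `X` is separable. -/
theorem separableSpace_of_closed_irreducible {X Y : Type*} [TopologicalSpace X]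
    [TopologicalSpace Y] (f : X → Y) (hf : Continuous f) (hclosed : IsClosedMap f)
    (hsurj : Function.Surjective f) (hirr : IsIrreducibleMap f)
    [TopologicalSpace.SeparableSpace Y] : TopologicalSpace.SeparableSpace X := by
  obtain ⟨D, hDcount, hDdense⟩ := TopologicalSpace.exists_countable_dense Y
  choose g hg using hsurj
  refine ⟨⟨g '' D, hDcount.image g, ?_⟩⟩
  rw [dense_iff_closure_eq]
  apply hirr _ isClosed_closure
  have hsub : D ⊆ f '' closure (g '' D) := fun y hy =>
    ⟨g y, subset_closure ⟨y, hy, rfl⟩, hg y⟩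
  have := closure_mono hsub
  rwa [hDdense.closure_eq, (hclosed _ isClosed_closure).closure_eq,
    Set.univ_subset_iff] at this
end

section
/- A subspace of a topological space homeomorphic to the ordinal space ω₁ that is contained in a compact subset must itself be compact, which is impossible; hence any homeomorphic copy of ω₁ inside a countably tight Hausdorff space X with a continuous map π : X → ω₁ having compact fibers over initial segments (i.e., π⁻¹([0,α]) compact for each α) is unbounded in the sense that π restricted to the copy has unbounded range. -/
open scoped Ordinal

/-- The space `ω₁` of countable ordinals, with the (subspace of the) order topology. -/
abbrev Omega1 : Type _ := (Set.Iio (Ordinal.omega 1) : Set Ordinal)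

/-- A space is countably tight if every point in the closure of a set is in the closure
of a countable subset. -/
def CountablyTight (X : Type*) [TopologicalSpace X] : Prop :=
  ∀ (A : Set X) (x : X), x ∈ closure A → ∃ B ⊆ A, B.Countable ∧ x ∈ closure B

/-!
A copy `W` of `ω₁` lying below a level `α` of `π` sits inside the compact set `π⁻¹[0, α]`.
Every countable subset of `ω₁` is bounded, hence lies in a compact initial segment, so every
countable subset of `W` lies in a compact subset of `W`; by countable tightness this makes `W`
closed, hence compact. But `ω₁` has no largest element, so it is not compact.
-/

namespace Omega1

instance : Nonempty Omega1 := ⟨⟨0, Ordinal.omega_pos 1⟩⟩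

instance : NoMaxOrder Omega1 := (Cardinal.isSuccLimit_omega 1).isSuccPrelimit.noMaxOrder_Iio

instance : NoncompactSpace Omega1 :=
  noncompactSpace_of_neBot (Filter.atTop_neBot.mono atTop_le_cocompact)

theorem bddAbove_of_countable {S : Set Omega1} (hS : S.Countable) : BddAbove S := by
  have : Countable S := hS.to_subtype
  refine ⟨⟨⨆ s : S, ((s : Omega1) : Ordinal), Ordinal.iSup_lt_omega_one fun s ↦ s.1.2⟩,
    fun s hs ↦ ?_⟩
  exact Subtype.coe_le_coe.mp (Ordinal.le_iSup (fun s : S ↦ ((s : Omega1) : Ordinal)) ⟨s, hs⟩)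

theorem isCompact_Iic (β : Omega1) : IsCompact (Set.Iic β) := by
  rw [Subtype.isCompact_iff, Set.image_subtype_val_Iio_Iic]
  simpa only [Set.Icc_bot] using isCompact_Icc (a := ⊥) (b := (β : Ordinal))

end Omega1

theorem CountablyTight.isClosed_of_countable_subset_isCompact {X : Type*} [TopologicalSpace X]
    [T2Space X] (ht : CountablyTight X) {W : Set X}
    (hW : ∀ B ⊆ W, B.Countable → ∃ K, IsCompact K ∧ B ⊆ K ∧ K ⊆ W) : IsClosed W := by
  refine closure_subset_iff_isClosed.mp fun x hx ↦ ?_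
  obtain ⟨B, hBW, hB, hxB⟩ := ht W x hx
  obtain ⟨K, hK, hBK, hKW⟩ := hW B hBW hB
  exact hKW (closure_minimal hBK hK.isClosed hxB)

theorem CountablyTight.isClosed_range_of_omega1 {X : Type*} [TopologicalSpace X] [T2Space X]
    (ht : CountablyTight X) {f : Omega1 → X} (hf : Continuous f) (hinj : Function.Injective f) :
    IsClosed (Set.range f) := by
  refine ht.isClosed_of_countable_subset_isCompact fun B hBf hB ↦ ?_
  obtain ⟨β, hβ⟩ := Omega1.bddAbove_of_countable (hB.preimage hinj)
  refine ⟨f '' Set.Iic β, (Omega1.isCompact_Iic β).image hf, ?_, Set.image_subset_range f _⟩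
  rintro _ hb
  obtain ⟨o, rfl⟩ := hBf hb
  exact ⟨o, hβ hb, rfl⟩

theorem copy_of_omega1_unbounded_general {X : Type*} [TopologicalSpace X] [T2Space X]
    (ht : CountablyTight X) (π : X → Omega1)
    (hcomp : ∀ α : Omega1, IsCompact (π ⁻¹' Set.Iic α))
    (W : Set X) (hW : Nonempty (Omega1 ≃ₜ W)) :
    ∀ α : Omega1, ∃ x ∈ W, α ≤ π x := by
  obtain ⟨e⟩ := hW
  by_contra! h
  obtain ⟨α, hα⟩ := h
  have hrange : Set.range (Subtype.val ∘ e) = W := by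
    rw [Set.range_comp, e.range_coe, Set.image_univ, Subtype.range_coe]
  have hclosed : IsClosed W := hrange ▸
    ht.isClosed_range_of_omega1 (continuous_subtype_val.comp e.continuous)
      (Subtype.val_injective.comp e.injective)
  have hcompact : IsCompact W :=
    (hcomp α).of_isClosed_subset hclosed fun x hx ↦ (hα x hx).le
  have : CompactSpace W := isCompact_iff_compactSpace.mp hcompact
  exact not_compactSpace_iff.mpr inferInstance e.symm.compactSpace

/-- In a countably tight Hausdorff space `X` with a continuous map `π : X → ω₁` whose
preimages of initial segments are compact, every homeomorphic copy of `ω₁` in `X` is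
unbounded: `π` restricted to the copy has unbounded range. -/
theorem copy_of_omega1_unbounded {X : Type*} [TopologicalSpace X] [T2Space X]
    (ht : CountablyTight X) (π : X → Omega1) (hπ : Continuous π)
    (hcomp : ∀ α : Omega1, IsCompact (π ⁻¹' Set.Iic α))
    (W : Set X) (hW : Nonempty (Omega1 ≃ₜ W)) :
    ∀ α : Omega1, ∃ x ∈ W, α ≤ π x :=
  copy_of_omega1_unbounded_general ht π hcomp W hW
end

section
/- Suppose X is a countably compact Hausdorff space with the Moving Off Property. Then X is compact. -/
/-- An indexed family of sets is discrete if every point of the space has a neighborhood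
meeting at most one member of the family. -/
def IsDiscreteFamily {X ι : Type*} [TopologicalSpace X] (F : ι → Set X) : Prop :=
  ∀ x : X, ∃ N ∈ nhds x, {i : ι | (N ∩ F i).Nonempty}.Subsingleton

/-- A moving off collection for `X`: a collection of nonempty compact sets such that every
compact set is avoided by some member. -/
def IsMovingOff {X : Type*} [TopologicalSpace X] (𝒦 : Set (Set X)) : Prop :=
  (∀ K ∈ 𝒦, IsCompact K ∧ K.Nonempty) ∧
  ∀ L : Set X, IsCompact L → ∃ K ∈ 𝒦, Disjoint K L

/-- `X` has the Moving Off Property if every moving off collection contains an infinite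
subcollection admitting a discrete open expansion. -/
def MovingOffProperty (X : Type*) [TopologicalSpace X] : Prop :=
  ∀ 𝒦 : Set (Set X), IsMovingOff 𝒦 →
    ∃ 𝒦' ⊆ 𝒦, 𝒦'.Infinite ∧ ∃ U : Set X → Set X,
      (∀ K ∈ 𝒦', IsOpen (U K) ∧ K ⊆ U K) ∧
      IsDiscreteFamily (fun K : 𝒦' => U (K : Set X))

/-- A countably compact Hausdorff space with the Moving Off Property is compact. -/
theorem compact_of_countablyCompact_mop {X : Type*} [TopologicalSpace X] [T2Space X]
    (hcc : ∀ U : ℕ → Set X, (∀ n, IsOpen (U n)) → (⋃ n, U n) = Set.univ →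
      ∃ t : Finset ℕ, (⋃ n ∈ t, U n) = Set.univ)
    (hmop : MovingOffProperty X) : CompactSpace X := by
  by_contra hnc
  have hnc' : ¬ IsCompact (Set.univ : Set X) := by
    intro h; exact hnc ⟨h⟩
  -- the collection of singletons is a moving off collection
  have hmo : IsMovingOff {s : Set X | ∃ x : X, s = {x}} := by
    constructor
    · rintro K ⟨x, rfl⟩; exact ⟨isCompact_singleton, ⟨x, rfl⟩⟩
    · intro L hL
      obtain ⟨x, hx⟩ : ∃ x, x ∉ L := by
        by_contra h; push_neg at h
        exact hnc' (by rwa [Set.eq_univ_of_forall h] at hL)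
      exact ⟨{x}, ⟨x, rfl⟩, Set.disjoint_singleton_left.2 hx⟩
  obtain ⟨𝒦', h𝒦'sub, h𝒦'inf, U, hU, hdisc⟩ := hmop _ hmo
  have f : ℕ ↪ 𝒦' := h𝒦'inf.natEmbedding
  -- each member of 𝒦' is a singleton; extract the points
  have hsing : ∀ n : ℕ, ∃ x : X, (f n : Set X) = {x} := fun n => h𝒦'sub (f n).2
  choose g hg using hsing
  have hginj : Function.Injective g := by
    intro m n hmn
    have : (f m : Set X) = (f n : Set X) := by rw [hg, hg, hmn]
    exact f.injective (Subtype.ext this)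
  have hgU : ∀ n, g n ∈ U (f n : Set X) := fun n =>
    (hU (f n : Set X) (f n).2).2 (by rw [hg n]; exact rfl)
  -- key: every point has an open nbhd containing at most one g n
  have key : ∀ x : X, ∃ O : Set X, IsOpen O ∧ x ∈ O ∧
      {n : ℕ | g n ∈ O}.Subsingleton := by
    intro x
    obtain ⟨N, hN, hsub⟩ := hdisc x
    refine ⟨interior N, isOpen_interior, mem_interior_iff_mem_nhds.2 hN, ?_⟩
    intro m hm n hn
    have hm' : f m ∈ {i : 𝒦' | (N ∩ U (i : Set X)).Nonempty} :=
      ⟨g m, interior_subset hm, hgU m⟩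
    have hn' : f n ∈ {i : 𝒦' | (N ∩ U (i : Set X)).Nonempty} :=
      ⟨g n, interior_subset hn, hgU n⟩
    exact f.injective (hsub hm' hn')
  set S : Set X := Set.range g with hS
  have hSinf : S.Infinite := Set.infinite_range_of_injective hginj
  -- S is closed
  have hSclosed : IsClosed S := by
    rw [← isOpen_compl_iff]
    rw [isOpen_iff_forall_mem_open]
    intro x hx
    obtain ⟨O, hOopen, hxO, hOsub⟩ := key x
    rcases Set.eq_empty_or_nonempty {n : ℕ | g n ∈ O} with hemp | ⟨m, hm⟩
    · refine ⟨O, ?_, hOopen, hxO⟩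
      intro y hy hyS
      obtain ⟨n, rfl⟩ := hyS
      exact absurd hy (by simpa using Set.eq_empty_iff_forall_notMem.1 hemp n)
    · refine ⟨O \ {g m}, ?_, hOopen.sdiff isClosed_singleton, ⟨hxO, ?_⟩⟩
      · rintro y ⟨hyO, hym⟩ ⟨n, rfl⟩
        exact hym (by rw [hOsub hyO hm]; exact rfl)
      · intro h
        exact hx ⟨m, (Set.mem_singleton_iff.1 h).symm⟩
  choose O hOopen hOmem hOsub using key
  set V : ℕ → Set X := fun k => Nat.rec Sᶜ (fun n _ => O (g n)) k with hV
  have hVopen : ∀ k, IsOpen (V k) := by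
    intro k; cases k with
    | zero => exact hSclosed.isOpen_compl
    | succ n => exact hOopen (g n)
  have hVcover : (⋃ k, V k) = Set.univ := by
    apply Set.eq_univ_of_forall
    intro x
    by_cases hx : x ∈ S
    · obtain ⟨n, rfl⟩ := hx
      exact Set.mem_iUnion.2 ⟨n + 1, hOmem (g n)⟩
    · exact Set.mem_iUnion.2 ⟨0, hx⟩
  obtain ⟨t, ht⟩ := hcc V hVopen hVcover
  -- S is covered by finitely many V k, each meeting S in ≤ 1 point
  have hfin : S.Finite := by
    have hSsub : S ⊆ ⋃ k ∈ t, S ∩ V k := by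
      intro x hx
      have : x ∈ ⋃ k ∈ t, V k := ht ▸ Set.mem_univ x
      obtain ⟨k, hk, hxk⟩ := Set.mem_iUnion₂.1 this
      exact Set.mem_iUnion₂.2 ⟨k, hk, hx, hxk⟩
    refine Set.Finite.subset (Set.Finite.biUnion t.finite_toSet ?_) hSsub
    intro k _
    cases k with
    | zero =>
      have : S ∩ Sᶜ = (∅ : Set X) := Set.inter_compl_self S
      exact this ▸ Set.finite_empty
    | succ n =>
      apply Set.Subsingleton.finite
      rintro a ⟨⟨p, rfl⟩, hpO⟩ b ⟨⟨q, rfl⟩, hqO⟩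
      rw [hOsub (g n) hpO hqO]
  exact hSinf hfin
end
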